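/- Let p, q be probability densities and w a weight function with ∫pw > 0 and ∫qw > 0, such that x ↦ w(x)·q(x)·log q(x) is μ-integrable and x ↦ w(x)·q(x)·log p(x) is quasi-integrable with ∫ w·q·log p dμ < ∞. Then the penalized weighted likelihood rule is strictly locally proper: ∫_X S^{PWL}(p,x;w)·q(x) dμ(x) ≥ ∫_X S^{PWL}(q,x;w)·q(x) dμ(x) (in the extended reals), with equality if and only if p = q μ-a.e. on {w > 0}. -/

import Mathlib

/-!
Pointwise, `(-w log p - w + Z_p) q = Z_p q - w q log q - p w + w (q log (q / p) + p - q)`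
with `Z_p = ∫ p w`. The first three terms form an integrable function whose integral
`Z_p - ∫ w q log q - Z_p` does not depend on `p`; the last one is nonnegative (possibly `+∞`)
and vanishes exactly where `w = 0` or `p = q`. The quasi-integral of an integrable function plus
a nonnegative one is the sum of the two integrals, so the expected score of `p` is
`-∫ w q log q` plus a `w`-localized Kullback–Leibler divergence of `q` from `p`.
-/

open MeasureTheory
open scoped ENNReal

noncomputable section

/-- A probability density with respect to `μ`. -/
def IsDensity {X : Type*} [MeasurableSpace X] (μ : Measure X) (p : X → ℝ) : Prop :=
  Measurable p ∧ (∀ x, 0 ≤ p x) ∧ ∫ x, p x ∂μ = 1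

/-- A weight function: measurable with values in `[0,1]`. -/
def IsWeight {X : Type*} [MeasurableSpace X] (w : X → ℝ) : Prop :=
  Measurable w ∧ ∀ x, w x ∈ Set.Icc (0 : ℝ) 1

/-- The extended-real logarithm of a real number: `log r` for `r > 0`, and `−∞`
for `r ≤ 0`. -/
def elog (r : ℝ) : EReal := if r ≤ 0 then ⊥ else ((Real.log r : ℝ) : EReal)

/-- The positive part of an extended real, as an extended nonnegative real. -/
def epos (e : EReal) : ℝ≥0∞ := if e = ⊤ then ⊤ else ENNReal.ofReal e.toReal

/-- The quasi-integral of an extended-real-valued function: positive part minus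
negative part (each a lower Lebesgue integral). -/
def eintE {X : Type*} [MeasurableSpace X] (μ : Measure X) (f : X → EReal) : EReal :=
  ((∫⁻ x, epos (f x) ∂μ : ℝ≥0∞) : EReal) - ((∫⁻ x, epos (-f x) ∂μ : ℝ≥0∞) : EReal)

/-- The renormalized density `p_w(x) = w(x)·p(x) / ∫ p·w dμ`. -/
def renorm {X : Type*} [MeasurableSpace X] (μ : Measure X) (p w : X → ℝ) : X → ℝ :=
  fun x => w x * p x / ∫ y, p y * w y ∂μ

/-- The penalized weighted likelihood rule `S^PWL(p,x;w) = −w(x)·log p(x) − w(x) + ∫pw`,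
with values in the extended reals (so that `−log p(x) = +∞` when `p(x) = 0`, and
`0·log 0 = 0`). -/
def SPWLe {X : Type*} [MeasurableSpace X] (μ : Measure X) (p w : X → ℝ) (x : X) : EReal :=
  -((w x : ℝ) : EReal) * elog (p x) + (((-(w x) + ∫ y, p y * w y ∂μ : ℝ)) : EReal)


open Real InformationTheory

section QuasiIntegral

variable {X : Type*} [MeasurableSpace X] {μ : Measure X}

@[simp] lemma epos_top : epos ⊤ = ⊤ := if_pos rfl

@[simp] lemma epos_bot : epos ⊥ = 0 := by simp [epos]

@[simp] lemma epos_coe (r : ℝ) : epos r = ENNReal.ofReal r := by simp [epos]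

lemma eintE_congr {f g : X → EReal} (h : f =ᵐ[μ] g) : eintE μ f = eintE μ g := by
  unfold eintE
  rw [lintegral_congr_ae (h.mono fun x hx => congrArg epos hx),
    lintegral_congr_ae (h.mono fun x hx => congrArg (fun e => epos (-e)) hx)]

lemma eintE_coe {g : X → ℝ} (hg : Integrable g μ) :
    eintE μ (fun x => (g x : EReal)) = ((∫ x, g x ∂μ : ℝ) : EReal) := by
  simp only [eintE, epos_coe, ← EReal.coe_neg]
  rw [integral_eq_lintegral_pos_part_sub_lintegral_neg_part hg, EReal.coe_sub,
    EReal.coe_ennreal_toReal hg.lintegral_lt_top.ne,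
    EReal.coe_ennreal_toReal (Integrable.lintegral_lt_top (f := fun x => -g x) hg.neg).ne]

lemma eintE_eq_top {f : X → EReal} (hpos : ∫⁻ x, epos (f x) ∂μ = ⊤)
    (hneg : ∫⁻ x, epos (-f x) ∂μ ≠ ⊤) : eintE μ f = ⊤ := by
  rw [eintE, hpos, EReal.coe_ennreal_top, ← EReal.coe_ennreal_toReal hneg, EReal.top_sub_coe]

lemma le_epos_coe_add_coe (a : ℝ) (b : ℝ≥0∞) :
    b ≤ epos ((a : EReal) + b) + ENNReal.ofReal (-a) := by
  induction b using ENNReal.recTopCoe with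
  | top => simp
  | coe t =>
    rw [EReal.coe_nnreal_eq_coe_real, ← EReal.coe_add, epos_coe, ← ENNReal.ofReal_coe_nnreal]
    calc ENNReal.ofReal t = ENNReal.ofReal (a + t + -a) := by ring_nf
      _ ≤ _ := ENNReal.ofReal_add_le

lemma epos_neg_coe_add_coe_le (a : ℝ) (b : ℝ≥0∞) :
    epos (-((a : EReal) + b)) ≤ ENNReal.ofReal (-a) := by
  induction b using ENNReal.recTopCoe with
  | top => simp
  | coe t =>
    rw [EReal.coe_nnreal_eq_coe_real, ← EReal.coe_add, ← EReal.coe_neg, epos_coe]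
    exact ENNReal.ofReal_le_ofReal (by linarith [t.2])

lemma eintE_coe_add_coe {g : X → ℝ} {φ : X → ℝ≥0∞} (hg : Integrable g μ)
    (hφ : AEMeasurable φ μ) :
    eintE μ (fun x => (g x : EReal) + φ x) = ((∫ x, g x ∂μ : ℝ) : EReal) + ∫⁻ x, φ x ∂μ := by
  have hneg : ∫⁻ x, ENNReal.ofReal (-g x) ∂μ ≠ ⊤ :=
    (Integrable.lintegral_lt_top (f := fun x => -g x) hg.neg).ne
  by_cases hΦ : ∫⁻ x, φ x ∂μ = ⊤
  · rw [hΦ, EReal.coe_ennreal_top, EReal.coe_add_top]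
    refine eintE_eq_top ?_ (ne_top_of_le_ne_top hneg (lintegral_mono fun x =>
      epos_neg_coe_add_coe_le (g x) (φ x)))
    have hsum : ⊤ ≤ ∫⁻ x, epos (g x + φ x) ∂μ + ∫⁻ x, ENNReal.ofReal (-g x) ∂μ := by
      have hm : AEMeasurable (fun x => ENNReal.ofReal (-g x)) μ :=
        hg.aemeasurable.neg.ennreal_ofReal
      rw [← hΦ, ← lintegral_add_right' _ hm]
      exact lintegral_mono fun x => le_epos_coe_add_coe (g x) (φ x)
    by_contra hpos
    exact (ENNReal.add_lt_top.2 ⟨lt_top_iff_ne_top.2 hpos, lt_top_iff_ne_top.2 hneg⟩).ne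
      (top_le_iff.1 hsum)
  · have hφ_fin : ∀ᵐ x ∂μ, φ x < ⊤ := ae_lt_top' hφ hΦ
    have hφ_int := integrable_toReal_of_lintegral_ne_top hφ hΦ
    rw [eintE_congr (g := fun x => ((g x + (φ x).toReal : ℝ) : EReal)),
      eintE_coe (g := fun x => g x + (φ x).toReal) (hg.add hφ_int), integral_add hg hφ_int,
      integral_toReal hφ hφ_fin, EReal.coe_add, EReal.coe_ennreal_toReal hΦ]
    filter_upwards [hφ_fin] with x hx
    rw [EReal.coe_add, EReal.coe_ennreal_toReal hx.ne]

end QuasiIntegral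

/-- The integrand `s log (s / r) + r - s` of the Kullback–Leibler divergence of `s` from `r`. -/
def klTerm (s r : ℝ) : ℝ≥0∞ :=
  if r = 0 ∧ 0 < s then ⊤ else ENNReal.ofReal (s * log s - s * log r + r - s)

lemma mul_klFun_div {r : ℝ} (hr : r ≠ 0) (s : ℝ) :
    r * klFun (s / r) = s * log s - s * log r + r - s := by
  rcases eq_or_ne s 0 with rfl | hs
  · simp [klFun_zero]
  · rw [klFun, log_div hs hr]
    field_simp

lemma klTerm_of_pos {r : ℝ} (hr : 0 < r) (s : ℝ) :
    klTerm s r = ENNReal.ofReal (r * klFun (s / r)) := by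
  rw [klTerm, if_neg fun h => hr.ne' h.1, mul_klFun_div hr.ne']

@[simp] lemma klTerm_self (s : ℝ) : klTerm s s = 0 := by
  simp +contextual [klTerm]

lemma klTerm_eq_zero_iff {r s : ℝ} (hr : 0 ≤ r) (hs : 0 ≤ s) : klTerm s r = 0 ↔ r = s := by
  rcases hr.eq_or_lt with rfl | hr
  · rcases hs.eq_or_lt with rfl | hs
    · simp
    · simp [klTerm, hs, hs.ne]
  · have hkl := klFun_nonneg (div_nonneg hs hr.le)
    rw [klTerm_of_pos hr, ENNReal.ofReal_eq_zero, (mul_nonneg hr.le hkl).ge_iff_eq',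
      mul_eq_zero, or_iff_right hr.ne', klFun_eq_zero_iff (div_nonneg hs hr.le),
      div_eq_one_iff_eq hr.ne', eq_comm]

lemma neg_mul_elog_add_mul_eq {a r s : ℝ} (z : ℝ) (ha : 0 ≤ a) (hr : 0 ≤ r) (hs : 0 ≤ s) :
    (-(a : EReal) * elog r + ((-a + z : ℝ) : EReal)) * s
      = ((z * s - a * s * log s - r * a : ℝ) : EReal)
        + (ENNReal.ofReal a * klTerm s r : ℝ≥0∞) := by
  rcases hr.eq_or_lt with rfl | hr
  · rw [elog, if_pos le_rfl]
    rcases ha.eq_or_lt with rfl | ha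
    · simp
    rcases hs.eq_or_lt with rfl | hs
    · simp
    rw [← EReal.coe_neg, EReal.coe_mul_bot_of_neg (by linarith), EReal.top_add_coe,
      EReal.top_mul_coe_of_pos hs, klTerm, if_pos ⟨rfl, hs⟩,
      ENNReal.mul_top (ENNReal.ofReal_pos.2 ha).ne', EReal.coe_ennreal_top, EReal.coe_add_top]
  · have hkl := mul_nonneg ha (mul_nonneg hr.le (klFun_nonneg (div_nonneg hs hr.le)))
    rw [elog, if_neg hr.not_ge, klTerm_of_pos hr, ← ENNReal.ofReal_mul ha,
      EReal.coe_ennreal_ofReal, max_eq_left hkl, mul_klFun_div hr.ne']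
    norm_cast
    ring_nf

section ExpectedScore

variable {X : Type*} [MeasurableSpace X] {μ : Measure X}

lemma IsDensity.integrable {p : X → ℝ} (hp : IsDensity μ p) : Integrable p μ :=
  .of_integral_ne_zero (hp.2.2 ▸ one_ne_zero)

lemma IsWeight.integrable_mul {w f : X → ℝ} (hw : IsWeight w) (hf : Integrable f μ) :
    Integrable (fun x => f x * w x) μ :=
  hf.mul_bdd hw.1.aestronglyMeasurable
    (ae_of_all _ fun x => by rw [Real.norm_of_nonneg (hw.2 x).1]; exact (hw.2 x).2)

lemma measurable_klTerm : Measurable fun z : ℝ × ℝ => klTerm z.1 z.2 :=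
  Measurable.ite (((measurableSet_singleton 0).preimage measurable_snd).inter
    (measurableSet_lt measurable_const measurable_fst)) measurable_const (by fun_prop)

def weightedKL (μ : Measure X) (w q r : X → ℝ) : ℝ≥0∞ :=
  ∫⁻ x, ENNReal.ofReal (w x) * klTerm (q x) (r x) ∂μ

lemma measurable_ofReal_mul_klTerm {w q r : X → ℝ} (hw : Measurable w) (hq : Measurable q)
    (hr : Measurable r) : Measurable fun x => ENNReal.ofReal (w x) * klTerm (q x) (r x) :=
  hw.ennreal_ofReal.mul (measurable_klTerm.comp (hq.prodMk hr))

@[simp] lemma weightedKL_self (w q : X → ℝ) : weightedKL μ w q q = 0 := by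
  simp [weightedKL]

lemma weightedKL_eq_zero_iff {w q r : X → ℝ} (hw : IsWeight w) (hq : IsDensity μ q)
    (hr : IsDensity μ r) : weightedKL μ w q r = 0 ↔ ∀ᵐ x ∂μ, 0 < w x → r x = q x := by
  rw [weightedKL, lintegral_eq_zero_iff'
    (measurable_ofReal_mul_klTerm hw.1 hq.1 hr.1).aemeasurable]
  refine Filter.eventually_congr (ae_of_all _ fun x => ?_)
  rw [Pi.zero_apply, mul_eq_zero, ENNReal.ofReal_eq_zero,
    klTerm_eq_zero_iff (hr.2.1 x) (hq.2.1 x), ← not_lt, or_iff_not_imp_left, not_not]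

lemma SPWLe_mul_eq {r q w : X → ℝ} (hr : ∀ x, 0 ≤ r x) (hq : ∀ x, 0 ≤ q x)
    (hw : ∀ x, 0 ≤ w x) (x : X) :
    SPWLe μ r w x * q x
      = (((∫ y, r y * w y ∂μ) * q x - w x * q x * log (q x) - r x * w x : ℝ) : EReal)
        + (ENNReal.ofReal (w x) * klTerm (q x) (r x) : ℝ≥0∞) :=
  neg_mul_elog_add_mul_eq _ (hw x) (hr x) (hq x)

theorem eintE_SPWLe_mul_eq {r q w : X → ℝ} (hr : IsDensity μ r) (hq : IsDensity μ q)
    (hw : IsWeight w) (hqq : Integrable (fun x => w x * q x * log (q x)) μ) :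
    eintE μ (fun x => SPWLe μ r w x * q x)
      = ((-∫ x, w x * q x * log (q x) ∂μ : ℝ) : EReal) + weightedKL μ w q r := by
  have hZq := hq.integrable.const_mul (∫ y, r y * w y ∂μ)
  have hrw := hw.integrable_mul hr.integrable
  have hZqq : Integrable (fun x => (∫ y, r y * w y ∂μ) * q x - w x * q x * log (q x)) μ :=
    hZq.sub hqq
  have hG : Integrable
      (fun x => (∫ y, r y * w y ∂μ) * q x - w x * q x * log (q x) - r x * w x) μ :=
    hZqq.sub hrw
  simp_rw [SPWLe_mul_eq hr.2.1 hq.2.1 fun x => (hw.2 x).1]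
  rw [eintE_coe_add_coe hG (measurable_ofReal_mul_klTerm hw.1 hq.1 hr.1).aemeasurable,
    integral_sub hZqq hrw, integral_sub hZq hqq, integral_const_mul, hq.2.2, weightedKL]
  congr 2
  ring

end ExpectedScore

theorem SPWL_strictly_locally_proper_general
    {X : Type*} [MeasurableSpace X] (μ : Measure X)
    (p q w : X → ℝ) (hp : IsDensity μ p) (hq : IsDensity μ q) (hw : IsWeight w)
    (hqq : Integrable (fun x => w x * q x * Real.log (q x)) μ) :
    eintE μ (fun x => SPWLe μ q w x * ((q x : ℝ) : EReal))
        ≤ eintE μ (fun x => SPWLe μ p w x * ((q x : ℝ) : EReal)) ∧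
    (eintE μ (fun x => SPWLe μ p w x * ((q x : ℝ) : EReal))
        = eintE μ (fun x => SPWLe μ q w x * ((q x : ℝ) : EReal))
      ↔ ∀ᵐ x ∂μ, 0 < w x → p x = q x) := by
  rw [eintE_SPWLe_mul_eq hp hq hw hqq, eintE_SPWLe_mul_eq hq hq hw hqq, weightedKL_self,
    ← weightedKL_eq_zero_iff hw hq hp, (EReal.addLECancellable_coe _).inj,
    EReal.coe_ennreal_eq_coe_ennreal_iff]
  exact ⟨by gcongr; exact EReal.coe_ennreal_le_coe_ennreal_iff.2 zero_le, Iff.rfl⟩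

/-- The penalized weighted likelihood rule is strictly locally proper:
the expected score of `p` under `q` is at least that of `q`, with equality iff
`p = q` μ-a.e. on `{w > 0}`. -/
theorem SPWL_strictly_locally_proper
    {X : Type*} [MeasurableSpace X] (μ : Measure X) [SigmaFinite μ]
    (p q w : X → ℝ) (hp : IsDensity μ p) (hq : IsDensity μ q) (hw : IsWeight w)
    (hpw : 0 < ∫ y, p y * w y ∂μ) (hqw : 0 < ∫ y, q y * w y ∂μ)
    (hqq : Integrable (fun x => w x * q x * Real.log (q x)) μ)
    (hqp : Integrable (fun x => max (w x * q x * Real.log (p x)) 0) μ) :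
    eintE μ (fun x => SPWLe μ q w x * ((q x : ℝ) : EReal))
        ≤ eintE μ (fun x => SPWLe μ p w x * ((q x : ℝ) : EReal)) ∧
    (eintE μ (fun x => SPWLe μ p w x * ((q x : ℝ) : EReal))
        = eintE μ (fun x => SPWLe μ q w x * ((q x : ℝ) : EReal))
      ↔ ∀ᵐ x ∂μ, 0 < w x → p x = q x) :=
  SPWL_strictly_locally_proper_general μ p q w hp hq hw hqq

end
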